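/- Let X be a Banach space, D a decomposition with shifts L, R satisfying the identities LR = I, RL = I - P₀, and suppose A, B ∈ L(X) with ‖A‖ < 1/2 and sup‖Rⁿ‖ ≤ 1 (after scaling). Then the operator T₀ = (M_I - M_R D_A)⁻¹ M_R (T₃B - T₂) is well-defined (the Neumann series converges since ‖M_R D_A‖ < 1), where M_R denotes left multiplication by R and D_A the inner derivation by A; and the 2×2 matrix identity [[A,0],[T₃,A-L]]·[[B,I],[T₀,0]] - [[B,I],[T₀,0]]·[[A,0],[T₃,A-L]] = [[T₁,L],[T₂,T₃]] holds provided T₁ + T₃ = AB - BA and T₀ satisfies T₀ = R(AT₀ - T₀A) + R(T₃B - T₂). -/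
import Mathlib


/-- The 2×2 block operator on `X × X` with entries `A, B, C, D`. -/
noncomputable def blockOp {X : Type*} [NormedAddCommGroup X] [NormedSpace ℝ X]
    (A B C D : X →L[ℝ] X) : X × X →L[ℝ] X × X :=
  (A.comp (ContinuousLinearMap.fst ℝ X X) + B.comp (ContinuousLinearMap.snd ℝ X X)).prod
    (C.comp (ContinuousLinearMap.fst ℝ X X) + D.comp (ContinuousLinearMap.snd ℝ X X))

lemma blockOp_mul {X : Type*} [NormedAddCommGroup X] [NormedSpace ℝ X]
    (A B C D A' B' C' D' : X →L[ℝ] X) :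
    blockOp A B C D * blockOp A' B' C' D' =
      blockOp (A*A'+B*C') (A*B'+B*D') (C*A'+D*C') (C*B'+D*D') := by
  refine ContinuousLinearMap.ext fun p => ?_
  simp [blockOp, ContinuousLinearMap.mul_apply, Prod.ext_iff, map_add,
    add_assoc, add_comm, add_left_comm]

lemma blockOp_sub {X : Type*} [NormedAddCommGroup X] [NormedSpace ℝ X]
    (A B C D A' B' C' D' : X →L[ℝ] X) :
    blockOp A B C D - blockOp A' B' C' D' = blockOp (A-A') (B-B') (C-C') (D-D') := by
  refine ContinuousLinearMap.ext fun p => ?_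
  simp [blockOp, Prod.ext_iff]
  constructor <;> abel

/-- The matrix operator `[[T₁, L],[T₂, T₃]]` is a commutator: the fixed-point
operator `T₀` exists and is unique, and for any such `T₀` the matrix identity
holds. -/
theorem stmt_19 (X : Type*) [NormedAddCommGroup X] [NormedSpace ℝ X]
    [CompleteSpace X] (L R P₀ A B T₁ T₂ T₃ : X →L[ℝ] X)
    (hLR : L * R = 1) (hRL : R * L = 1 - P₀)
    (hA : ‖A‖ < 1 / 2) (hRpow : ∀ n : ℕ, ‖R ^ n‖ ≤ 1)
    (hsum : T₁ + T₃ = A * B - B * A) :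
    (∃! T₀ : X →L[ℝ] X, T₀ = R * (A * T₀ - T₀ * A) + R * (T₃ * B - T₂)) ∧
    (∀ T₀ : X →L[ℝ] X, T₀ = R * (A * T₀ - T₀ * A) + R * (T₃ * B - T₂) →
      blockOp A 0 T₃ (A - L) * blockOp B 1 T₀ 0 -
        blockOp B 1 T₀ 0 * blockOp A 0 T₃ (A - L) =
      blockOp T₁ L T₂ T₃) := by
  constructor
  · -- existence and uniqueness via Banach fixed point theorem
    have hR : ‖R‖ ≤ 1 := by simpa using hRpow 1
    set f : (X →L[ℝ] X) → (X →L[ℝ] X) :=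
      fun T => R * (A * T - T * A) + R * (T₃ * B - T₂) with hf
    have hK : (2 * ‖A‖₊ : NNReal) < 1 := by
      rw [← NNReal.coe_lt_coe]
      push_cast
      linarith
    have hLip : LipschitzWith (2 * ‖A‖₊) f := by
      refine LipschitzWith.of_dist_le_mul fun T S => ?_
      rw [dist_eq_norm, dist_eq_norm]
      have h1 : f T - f S = R * (A * (T - S) - (T - S) * A) := by
        simp only [hf]; noncomm_ring
      rw [h1]
      have hcast : ((2 * ‖A‖₊ : NNReal) : ℝ) = 2 * ‖A‖ := by push_cast; ring
      rw [hcast]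
      calc ‖R * (A * (T - S) - (T - S) * A)‖
          ≤ ‖R‖ * ‖A * (T - S) - (T - S) * A‖ := norm_mul_le _ _
        _ ≤ 1 * (‖A * (T - S)‖ + ‖(T - S) * A‖) :=
            mul_le_mul hR (norm_sub_le _ _) (norm_nonneg _) zero_le_one
        _ ≤ 1 * (‖A‖ * ‖T - S‖ + ‖T - S‖ * ‖A‖) := by
            gcongr <;> exact norm_mul_le _ _
        _ = 2 * ‖A‖ * ‖T - S‖ := by ring
    have hC : ContractingWith (2 * ‖A‖₊) f := ⟨hK, hLip⟩
    refine ⟨hC.fixedPoint f, (hC.fixedPoint_isFixedPt).symm, fun y hy => ?_⟩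
    exact hC.fixedPoint_unique hy.symm
  · intro T₀ hT₀
    have hL0 : L * T₀ = (A * T₀ - T₀ * A) + (T₃ * B - T₂) := by
      conv_lhs => rw [hT₀]
      rw [mul_add, ← mul_assoc, ← mul_assoc, hLR, one_mul, one_mul]
    rw [blockOp_mul, blockOp_mul, blockOp_sub]
    have e1 : A*B + 0*T₀ - (B*A + 1*T₃) = T₁ := by
      calc A*B + 0*T₀ - (B*A + 1*T₃) = (A*B - B*A) - T₃ := by noncomm_ring
        _ = (T₁ + T₃) - T₃ := by rw [hsum]
        _ = T₁ := by abel
    have e2 : A*1 + 0*0 - (B*0 + 1*(A - L)) = L := by noncomm_ring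
    have e3 : T₃*B + (A - L)*T₀ - (T₀*A + 0*T₃) = T₂ := by
      calc T₃*B + (A - L)*T₀ - (T₀*A + 0*T₃)
          = (T₃*B - T₂) + (A*T₀ - T₀*A) - (L*T₀) + T₂ := by noncomm_ring
        _ = T₂ := by rw [hL0]; abel
    have e4 : T₃*1 + (A - L)*0 - (T₀*0 + 0*(A - L)) = T₃ := by noncomm_ring
    rw [e1, e2, e3, e4]
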